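/- arXiv:2512.17611 — 7 statements merged into one kernel-verified Lean document; each statement's English description precedes it below -/
import Mathlib

section
/- Let u ∈ C²(B) ∩ C⁰(closure B) be a radial function on the unit ball B ⊂ ℝ⁴ with u = 0 on ∂B and Δu ∈ L²(B). Then for all x ∈ B \ {0}, |u(x)| ≤ (−log|x|)^{1/2}/(2√ω₃) · ‖Δu‖_{L²(B)}, where ω₃ = 2π² is the surface area of the unit sphere in ℝ⁴. -/
open MeasureTheory

noncomputable def ω₃ : ℝ := 2 * Real.pi ^ 2

/-- The radial Laplacian in dimension 4: for a radial function `u(x) = u(|x|)` on the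
unit ball of `ℝ⁴`, `Δu(x) = u''(r) + (3/r) u'(r)` with `r = |x|`. -/
noncomputable def radLap (u : ℝ → ℝ) (r : ℝ) : ℝ :=
  deriv (deriv u) r + 3 / r * deriv u r

/-- `‖Δu‖_{L²(B)}²` for a radial function on the unit ball `B ⊂ ℝ⁴`, written in polar
coordinates: `∫_B |Δu|² dx = ω₃ ∫_0^1 |u''(r) + (3/r)u'(r)|² r³ dr`. -/
noncomputable def radLapNormSq (u : ℝ → ℝ) : ℝ :=
  ω₃ * ∫ r in Set.Ioo (0:ℝ) 1, (radLap u r) ^ 2 * r ^ 3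

/-! Since `Δu = t⁻³ (t³ u')'`, we have `t³ u'(t) = ∫₀ᵗ s³ Δu(s) ds + C`, and `C = 0` because
otherwise `u' ~ C t⁻³` would make `u` blow up at the origin. Integrating `u' = t⁻³ ∫₀ᵗ s³ Δu` from
`r` to `1` by parts against `H(t) = (t⁻² - 1)/2` (so `H' = -t⁻³`, `H(1) = 0`) and using `u(1) = 0`
gives the Green representation `u(r) = -∫₀¹ H(max r t) Δu(t) t³ dt`. Cauchy–Schwarz with the weight
`t³` bounds `|u(r)|` by `(∫₀¹ H(max r t)² t³ dt)^{1/2} (∫₀¹ |Δu|² t³ dt)^{1/2}`, and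
`∫₀¹ H(max r t)² t³ dt = (-log r - (1 - r²)/2)/4 ≤ -log r / 4`. -/

open Set Filter Topology

theorem abs_integral_mul_le_sqrt_mul_sqrt {α : Type*} [MeasurableSpace α] {μ : Measure α}
    {f g : α → ℝ} (hf : MemLp f 2 μ) (hg : MemLp g 2 μ) :
    |∫ x, f x * g x ∂μ| ≤ √(∫ x, f x ^ 2 ∂μ) * √(∫ x, g x ^ 2 ∂μ) := by
  have hnorm : ∀ φ : α → ℝ, ∫ x, ‖φ x‖ ^ (2 : ℝ) ∂μ = ∫ x, φ x ^ 2 ∂μ := fun φ => by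
    simp only [Real.rpow_two, Real.norm_eq_abs, sq_abs]
  calc |∫ x, f x * g x ∂μ| ≤ ∫ x, ‖f x‖ * ‖g x‖ ∂μ := by
        simpa only [norm_mul, Real.norm_eq_abs] using
          norm_integral_le_integral_norm (μ := μ) (fun x => f x * g x)
    _ ≤ (∫ x, ‖f x‖ ^ (2 : ℝ) ∂μ) ^ (1 / (2 : ℝ)) * (∫ x, ‖g x‖ ^ (2 : ℝ) ∂μ) ^ (1 / (2 : ℝ)) :=
        integral_mul_norm_le_Lp_mul_Lq Real.HolderConjugate.two_two
          (by simpa using hf) (by simpa using hg)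
    _ = √(∫ x, f x ^ 2 ∂μ) * √(∫ x, g x ^ 2 ∂μ) := by
        rw [hnorm, hnorm, Real.sqrt_eq_rpow, Real.sqrt_eq_rpow]

theorem abs_setIntegral_mul_weight_le {α : Type*} [MeasurableSpace α] {μ : Measure α} {s : Set α}
    {w f g : α → ℝ} (hs : MeasurableSet s) (hw : ∀ x ∈ s, 0 ≤ w x)
    (hf : MemLp (fun x => f x * √(w x)) 2 (μ.restrict s))
    (hg : MemLp (fun x => g x * √(w x)) 2 (μ.restrict s)) :
    |∫ x in s, f x * (w x * g x) ∂μ|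
      ≤ √(∫ x in s, f x ^ 2 * w x ∂μ) * √(∫ x in s, g x ^ 2 * w x ∂μ) := by
  have hsq : ∀ φ : α → ℝ, ∫ x in s, (φ x * √(w x)) ^ 2 ∂μ = ∫ x in s, φ x ^ 2 * w x ∂μ :=
    fun φ => setIntegral_congr_fun hs fun x hx => by
      rw [mul_pow, Real.sq_sqrt (hw x hx)]
  have hprod : ∫ x in s, f x * (w x * g x) ∂μ = ∫ x in s, (f x * √(w x)) * (g x * √(w x)) ∂μ :=
    setIntegral_congr_fun hs fun x hx => by
      rw [mul_mul_mul_comm, ← sq, Real.sq_sqrt (hw x hx)]; ring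
  rw [hprod, ← hsq f, ← hsq g]
  exact abs_integral_mul_le_sqrt_mul_sqrt hf hg

theorem memLp_two_restrict_Ioo_of_continuousOn {f : ℝ → ℝ} {a b : ℝ}
    (hf : ContinuousOn f (Icc a b)) : MemLp f 2 (volume.restrict (Ioo a b)) :=
  (memLp_two_iff_integrable_sq ((hf.mono Ioo_subset_Icc_self).aestronglyMeasurable
    measurableSet_Ioo)).2 (((hf.pow 2).integrableOn_compact isCompact_Icc).mono_set
      Ioo_subset_Icc_self)

theorem eq_zero_of_tendsto_pow_mul_deriv {u : ℝ → ℝ} {n : ℕ} {C : ℝ} (hn : 1 ≤ n)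
    (hc : ContinuousWithinAt u (Ioi 0) 0) (hd : ∀ᶠ t in 𝓝[>] 0, DifferentiableAt ℝ u t)
    (hC : Tendsto (fun t => t ^ n * deriv u t) (𝓝[>] 0) (𝓝 C)) : C = 0 := by
  -- if `C ≠ 0`, the mean value theorem gives `|u t - u (t / 2)| ≥ |C| / 4` for all small `t > 0`
  by_contra hC0
  have hCpos : 0 < |C| := abs_pos.mpr hC0
  have hbig : ∀ᶠ t in 𝓝[>] 0, |C| / 2 < |t ^ n * deriv u t| :=
    hC.abs.eventually (lt_mem_nhds (by linarith))
  obtain ⟨ε, hε, hsub⟩ := mem_nhdsGT_iff_exists_Ioo_subset.1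
    (hbig.and (hd.and (Ioo_mem_nhdsGT (zero_lt_one' ℝ))))
  have hhalf : Tendsto (fun t : ℝ => t / 2) (𝓝[>] 0) (𝓝[>] 0) :=
    tendsto_nhdsWithin_of_tendsto_nhds_of_eventually_within _
      (((continuous_id.div_const (2 : ℝ)).tendsto' 0 0 (by simp)).mono_left nhdsWithin_le_nhds)
      (eventually_nhdsWithin_of_forall fun t (ht : 0 < t) => half_pos ht)
  have hosc : Tendsto (fun t => |u t - u (t / 2)|) (𝓝[>] 0) (𝓝 0) := by
    simpa using (hc.tendsto.sub (hc.tendsto.comp hhalf)).abs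
  obtain ⟨t, hosc_t, htε⟩ := ((hosc.eventually (gt_mem_nhds (by linarith : 0 < |C| / 4))).and
    (Ioo_mem_nhdsGT hε)).exists
  have hgood : ∀ s ∈ Icc (t / 2) t, s ∈ Ioo 0 ε := fun s hs =>
    ⟨by linarith [hs.1, htε.1], hs.2.trans_lt htε.2⟩
  obtain ⟨c, hc, hslope⟩ := exists_deriv_eq_slope u (by linarith [htε.1] : t / 2 < t)
    (fun s hs => (hsub (hgood s hs)).2.1.continuousAt.continuousWithinAt)
    (fun s hs => (hsub (hgood s (Ioo_subset_Icc_self hs))).2.1.differentiableWithinAt)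
  obtain ⟨hcbig, -, hc0, hc1⟩ := hsub (hgood c (Ioo_subset_Icc_self hc))
  have hcn : c ^ n ≤ t := (pow_le_of_le_one hc0.le hc1.le (by omega)).trans hc.2.le
  have hslope' : t * |deriv u c| = 2 * |u t - u (t / 2)| := by
    rw [hslope, show t - t / 2 = t / 2 by ring, abs_div, abs_of_pos (half_pos htε.1)]
    field_simp [htε.1.ne']
  rw [abs_mul, abs_of_pos (pow_pos hc0 n)] at hcbig
  nlinarith [abs_nonneg (deriv u c)]

theorem integral_comp_max_mul {φ h : ℝ → ℝ} {a r b : ℝ} (har : a ≤ r) (hrb : r ≤ b)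
    (hφ : ContinuousOn φ (Icc r b)) (hh : IntervalIntegrable h volume a b) :
    ∫ t in a..b, φ (max r t) * h t = φ r * (∫ t in a..r, h t) + ∫ t in r..b, φ t * h t := by
  have hleft : EqOn (fun t => φ (max r t) * h t) (fun t => φ r * h t) (uIcc a r) :=
    fun t ht => by simp only [max_eq_left (uIcc_of_le har ▸ ht).2]
  have hright : EqOn (fun t => φ (max r t) * h t) (fun t => φ t * h t) (uIcc r b) :=
    fun t ht => by simp only [max_eq_right (uIcc_of_le hrb ▸ ht).1]
  have hha : IntervalIntegrable h volume a r :=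
    hh.mono_set (uIcc_subset_uIcc_left (mem_uIcc_of_le har hrb))
  have hhb : IntervalIntegrable h volume r b :=
    hh.mono_set (uIcc_subset_uIcc_right (mem_uIcc_of_le har hrb))
  rw [← intervalIntegral.integral_add_adjacent_intervals
      ((hha.const_mul (φ r)).congr (hleft.symm.mono uIoc_subset_uIcc))
      ((hhb.continuousOn_mul (uIcc_of_le hrb ▸ hφ)).congr (hright.symm.mono uIoc_subset_uIcc)),
    intervalIntegral.integral_congr hleft, intervalIntegral.integral_congr hright,
    intervalIntegral.integral_const_mul]

/-- The radial profile `H` of the Green function of `-Δ` in the unit ball of `ℝ⁴`: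
`(t³ H')' = 0`, `t³ H' = -1` and `H(1) = 0`. -/
noncomputable def radialGreen (s : ℝ) : ℝ := ((s ^ 2)⁻¹ - 1) / 2

theorem hasDerivAt_radialGreen {t : ℝ} (ht : t ≠ 0) :
    HasDerivAt radialGreen (-(t ^ 3)⁻¹) t := by
  have h := ((((hasDerivAt_id t).pow 2).inv (pow_ne_zero 2 ht)).sub_const 1).div_const 2
  refine h.congr_deriv ?_
  simp only [Nat.cast_ofNat, id_eq, Nat.add_one_sub_one, pow_one, mul_one, Pi.pow_apply]
  field_simp

theorem continuousOn_radialGreen : ContinuousOn radialGreen (Ioi 0) :=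
  fun _ ht => (hasDerivAt_radialGreen (ne_of_gt ht)).continuousAt.continuousWithinAt

theorem radialGreen_one : radialGreen 1 = 0 := by
  norm_num [radialGreen]

theorem integral_div_cube_eq_radialGreen_mul_add {G g : ℝ → ℝ} {r : ℝ} (hr : 0 < r) (hr1 : r ≤ 1)
    (hG : ContinuousOn G (Icc r 1)) (hg : ∀ t ∈ Ioo r 1, HasDerivAt G (g t) t)
    (hgi : IntervalIntegrable g volume r 1) :
    ∫ t in r..1, G t / t ^ 3 = radialGreen r * G r + ∫ t in r..1, radialGreen t * g t := by
  have hpos : ∀ t ∈ uIcc r 1, 0 < t := fun t ht => hr.trans_le (uIcc_of_le hr1 ▸ ht).1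
  have hibp := intervalIntegral.integral_mul_deriv_eq_deriv_mul_of_hasDerivAt
    (uIcc_of_le hr1 ▸ hG) (continuousOn_radialGreen.mono hpos)
    (by simpa [hr1] using hg)
    (fun t ht => hasDerivAt_radialGreen (hpos t (by simpa [hr1] using Ioo_subset_Icc_self ht)).ne')
    hgi
    (((continuousOn_pow 3).inv₀ fun t ht => pow_ne_zero 3 (hpos t ht).ne').neg.intervalIntegrable)
  calc ∫ t in r..1, G t / t ^ 3 = -∫ t in r..1, G t * -(t ^ 3)⁻¹ := by
        rw [← intervalIntegral.integral_neg]
        simp only [mul_neg, neg_neg, div_eq_mul_inv]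
    _ = radialGreen r * G r + ∫ t in r..1, radialGreen t * g t := by
        rw [hibp, radialGreen_one]
        simp only [mul_comm (g _)]
        ring

theorem integral_radialGreen_max_sq_mul_cube {r : ℝ} (hr : r ∈ Ioo 0 1) :
    ∫ t in Ioo 0 1, radialGreen (max r t) ^ 2 * t ^ 3 = (-Real.log r - (1 - r ^ 2) / 2) / 4 := by
  have hpos : ∀ t ∈ Icc r 1, 0 < t := fun t ht => hr.1.trans_le ht.1
  have hprim : ∀ t, 0 < t → HasDerivAt (fun s => (Real.log s - s ^ 2 + s ^ 4 / 4) / 4)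
      (radialGreen t ^ 2 * t ^ 3) t := fun t ht => by
    have ht0 := ht.ne'
    refine ((((Real.hasDerivAt_log ht0).sub (hasDerivAt_pow 2 t)).add
      ((hasDerivAt_pow 4 t).div_const 4)).div_const 4).congr_deriv ?_
    simp only [radialGreen]
    field_simp
    ring
  have hright : ∫ t in r..1, radialGreen t ^ 2 * t ^ 3
      = (-Real.log r - 3 / 4 + r ^ 2 - r ^ 4 / 4) / 4 := by
    rw [intervalIntegral.integral_eq_sub_of_hasDerivAt_of_le hr.2.le
      (fun t ht => (hprim t (hpos t ht)).continuousAt.continuousWithinAt)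
      (fun t ht => hprim t (hpos t (Ioo_subset_Icc_self ht)))
      (ContinuousOn.intervalIntegrable ?_)]
    · norm_num
      ring
    · rw [uIcc_of_le hr.2.le]
      exact ((continuousOn_radialGreen.mono hpos).pow 2).mul (continuousOn_pow 3)
  have hsplit := integral_comp_max_mul (φ := fun s => radialGreen s ^ 2) (h := fun t => t ^ 3)
    hr.1.le hr.2.le ((continuousOn_radialGreen.mono hpos).pow 2)
    ((continuous_pow 3).intervalIntegrable 0 1)
  rw [← integral_Ioc_eq_integral_Ioo, ← intervalIntegral.integral_of_le zero_le_one, hsplit,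
    hright, integral_pow]
  have hr0 := hr.1.ne'
  simp only [radialGreen]
  field_simp
  ring

section

variable {u : ℝ → ℝ}

theorem hasDerivAt_cube_mul_deriv (hu : ContDiffOn ℝ 2 u (Ioo 0 1)) {t : ℝ} (ht : t ∈ Ioo 0 1) :
    HasDerivAt (fun s => s ^ 3 * deriv u s) (t ^ 3 * radLap u t) t := by
  have hu' : ContDiffOn ℝ 1 (deriv u) (Ioo 0 1) := hu.deriv_of_isOpen isOpen_Ioo (by norm_num)
  have hd := ((hu'.differentiableOn one_ne_zero t ht).differentiableAt
    (isOpen_Ioo.mem_nhds ht)).hasDerivAt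
  refine ((hasDerivAt_pow 3 t).mul hd).congr_deriv ?_
  simp only [radLap]
  field_simp [ht.1.ne']
  ring

theorem continuousOn_radLap (hu : ContDiffOn ℝ 2 u (Ioo 0 1)) :
    ContinuousOn (radLap u) (Ioo 0 1) := by
  have hu' : ContDiffOn ℝ 1 (deriv u) (Ioo 0 1) := hu.deriv_of_isOpen isOpen_Ioo (by norm_num)
  have hu'' : ContDiffOn ℝ 0 (deriv (deriv u)) (Ioo 0 1) :=
    hu'.deriv_of_isOpen isOpen_Ioo (by norm_num)
  exact hu''.continuousOn.add
    ((continuousOn_const.div continuousOn_id fun t ht => ht.1.ne').mul hu'.continuousOn)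

theorem continuousOn_cube_mul_radLap (hu : ContDiffOn ℝ 2 u (Ioo 0 1)) :
    ContinuousOn (fun t => t ^ 3 * radLap u t) (Ioo 0 1) :=
  (continuousOn_pow 3).mul (continuousOn_radLap hu)

theorem memLp_radLap_mul_sqrt_cube (hu : ContDiffOn ℝ 2 u (Ioo 0 1))
    (hL2 : IntegrableOn (fun t => radLap u t ^ 2 * t ^ 3) (Ioo 0 1)) :
    MemLp (fun t => radLap u t * √(t ^ 3)) 2 (volume.restrict (Ioo 0 1)) :=
  (memLp_two_iff_integrable_sq (((continuousOn_radLap hu).mul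
    (by fun_prop)).aestronglyMeasurable measurableSet_Ioo)).2
    (hL2.congr_fun (fun t ht => by
      simp only [Pi.mul_apply, mul_pow, Real.sq_sqrt (pow_nonneg ht.1.le 3)])
      measurableSet_Ioo)

theorem intervalIntegrable_cube_mul_radLap (hu : ContDiffOn ℝ 2 u (Ioo 0 1))
    (hL2 : IntegrableOn (fun t => radLap u t ^ 2 * t ^ 3) (Ioo 0 1)) :
    IntervalIntegrable (fun t => t ^ 3 * radLap u t) volume 0 1 := by
  rw [intervalIntegrable_iff_integrableOn_Ioo_of_le zero_le_one]
  refine IntegrableOn.congr_fun ((memLp_two_restrict_Ioo_of_continuousOn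
    (f := fun t => √(t ^ 3)) (by fun_prop)).integrable_mul (memLp_radLap_mul_sqrt_cube hu hL2))
    (fun t ht => ?_) measurableSet_Ioo
  simp only [Pi.mul_apply]
  rw [mul_left_comm, Real.mul_self_sqrt (pow_nonneg ht.1.le 3), mul_comm]

theorem hasDerivAt_primitive_cube_mul_radLap (hu : ContDiffOn ℝ 2 u (Ioo 0 1))
    (hL2 : IntegrableOn (fun t => radLap u t ^ 2 * t ^ 3) (Ioo 0 1)) {t : ℝ} (ht : t ∈ Ioo 0 1) :
    HasDerivAt (fun t => ∫ s in 0..t, s ^ 3 * radLap u s) (t ^ 3 * radLap u t) t :=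
  intervalIntegral.integral_hasDerivAt_right
    ((intervalIntegrable_cube_mul_radLap hu hL2).mono_set
      (uIcc_subset_uIcc_left (mem_uIcc_of_le ht.1.le ht.2.le)))
    ((continuousOn_cube_mul_radLap hu).stronglyMeasurableAtFilter isOpen_Ioo t ht)
    ((continuousOn_cube_mul_radLap hu).continuousAt (isOpen_Ioo.mem_nhds ht))

theorem continuousOn_primitive_cube_mul_radLap (hu : ContDiffOn ℝ 2 u (Ioo 0 1))
    (hL2 : IntegrableOn (fun t => radLap u t ^ 2 * t ^ 3) (Ioo 0 1)) :
    ContinuousOn (fun t => ∫ s in 0..t, s ^ 3 * radLap u s) (Icc 0 1) := by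
  simpa only [uIcc_of_le zero_le_one] using intervalIntegral.continuousOn_primitive_interval
    ((intervalIntegrable_iff' enorm_ne_top).1 (intervalIntegrable_cube_mul_radLap hu hL2))

theorem cube_mul_deriv_eq_integral (hu : ContDiffOn ℝ 2 u (Ioo 0 1))
    (huc : ContinuousWithinAt u (Ioi 0) 0)
    (hL2 : IntegrableOn (fun t => radLap u t ^ 2 * t ^ 3) (Ioo 0 1)) {t : ℝ} (ht : t ∈ Ioo 0 1) :
    t ^ 3 * deriv u t = ∫ s in 0..t, s ^ 3 * radLap u s := by
  have hhi := intervalIntegrable_cube_mul_radLap hu hL2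
  have hhalf : (1 / 2 : ℝ) ∈ Ioo 0 1 := by norm_num
  have hsub : ∀ {s : ℝ}, s ∈ Ioo 0 1 → uIcc 0 s ⊆ uIcc 0 1 := fun hs =>
    uIcc_subset_uIcc_left (mem_uIcc_of_le hs.1.le hs.2.le)
  set C := (1 / 2) ^ 3 * deriv u (1 / 2) - ∫ s in 0..1 / 2, s ^ 3 * radLap u s with hC_def
  have hconst : ∀ s ∈ Ioo (0 : ℝ) 1, s ^ 3 * deriv u s = (∫ x in 0..s, x ^ 3 * radLap u x) + C := by
    intro s hs
    have hsub' := ordConnected_Ioo.uIcc_subset hs hhalf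
    have hftc := intervalIntegral.integral_eq_sub_of_hasDerivAt
      (fun x hx => hasDerivAt_cube_mul_deriv hu (hsub' hx))
      ((continuousOn_cube_mul_radLap hu).mono hsub').intervalIntegrable
    have hdiff := intervalIntegral.integral_interval_sub_left (hhi.mono_set (hsub hhalf))
      (hhi.mono_set (hsub hs))
    linarith [hC_def]
  have hC : C = 0 := by
    refine eq_zero_of_tendsto_pow_mul_deriv (n := 3) (by norm_num) huc ?_ ?_
    · filter_upwards [Ioo_mem_nhdsGT zero_lt_one] with s hs
      exact (hu.differentiableOn (by norm_num) s hs).differentiableAt (isOpen_Ioo.mem_nhds hs)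
    · have hG := ((continuousOn_primitive_cube_mul_radLap hu hL2 0
        (left_mem_Icc.2 zero_le_one)).mono_of_mem_nhdsWithin
        (Icc_mem_nhdsGT zero_lt_one)).tendsto.add_const C
      rw [intervalIntegral.integral_same, zero_add] at hG
      refine hG.congr' ?_
      filter_upwards [Ioo_mem_nhdsGT zero_lt_one] with s hs using (hconst s hs).symm
  simpa [hC] using hconst t ht

theorem eq_neg_integral_radialGreen_max_mul (hu : ContDiffOn ℝ 2 u (Ioo 0 1))
    (huc : ContinuousOn u (Icc 0 1)) (hub : u 1 = 0)
    (hL2 : IntegrableOn (fun t => radLap u t ^ 2 * t ^ 3) (Ioo 0 1)) {r : ℝ} (hr : r ∈ Ioo 0 1) :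
    u r = -∫ t in Ioo 0 1, radialGreen (max r t) * (t ^ 3 * radLap u t) := by
  have hhi := intervalIntegrable_cube_mul_radLap hu hL2
  have hsub : Icc r 1 ⊆ Icc 0 1 := Icc_subset_Icc_left hr.1.le
  have hsub' : Ioo r 1 ⊆ Ioo 0 1 := Ioo_subset_Ioo_left hr.1.le
  have hpos : ∀ t ∈ Icc r 1, 0 < t := fun t ht => hr.1.trans_le ht.1
  have hG := (continuousOn_primitive_cube_mul_radLap hu hL2).mono hsub
  have hderiv : ∀ t ∈ Ioo r 1, HasDerivAt u ((∫ s in 0..t, s ^ 3 * radLap u s) / t ^ 3) t := by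
    intro t ht
    have ht' := hsub' ht
    rw [← cube_mul_deriv_eq_integral hu ((huc 0 (left_mem_Icc.2 zero_le_one)).mono_of_mem_nhdsWithin
      (Icc_mem_nhdsGT zero_lt_one)) hL2 ht', mul_div_cancel_left₀ _ (pow_ne_zero 3 ht'.1.ne')]
    exact ((hu.differentiableOn (by norm_num) t ht').differentiableAt
      (isOpen_Ioo.mem_nhds ht')).hasDerivAt
  have hftc := intervalIntegral.integral_eq_sub_of_hasDerivAt_of_le hr.2.le (huc.mono hsub) hderiv
    (ContinuousOn.intervalIntegrable (by
      rw [uIcc_of_le hr.2.le]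
      exact hG.div (continuousOn_pow 3) fun t ht => pow_ne_zero 3 (hpos t ht).ne'))
  rw [← integral_Ioc_eq_integral_Ioo, ← intervalIntegral.integral_of_le zero_le_one,
    integral_comp_max_mul hr.1.le hr.2.le (continuousOn_radialGreen.mono hpos) hhi,
    ← integral_div_cube_eq_radialGreen_mul_add hr.1 hr.2.le hG
      (fun t ht => hasDerivAt_primitive_cube_mul_radLap hu hL2 (hsub' ht))
      (hhi.mono_set (uIcc_subset_uIcc_right (mem_uIcc_of_le hr.1.le hr.2.le))),
    hftc, hub]
  ring

end

theorem radial_pointwise_estimate (u : ℝ → ℝ)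
    (hu : ContDiffOn ℝ 2 u (Set.Ioo 0 1))
    (huc : ContinuousOn u (Set.Icc 0 1))
    (hub : u 1 = 0)
    (hL2 : IntegrableOn (fun r => (radLap u r) ^ 2 * r ^ 3) (Set.Ioo 0 1)) :
    ∀ r ∈ Set.Ioo (0:ℝ) 1,
      |u r| ≤ Real.sqrt (-Real.log r) / (2 * Real.sqrt ω₃) *
        Real.sqrt (radLapNormSq u) := by
  intro r hr
  have hK : MemLp (fun t => radialGreen (max r t) * √(t ^ 3)) 2 (volume.restrict (Ioo 0 1)) :=
    memLp_two_restrict_Ioo_of_continuousOn ((continuousOn_radialGreen.comp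
      (continuous_const.max continuous_id).continuousOn
      fun t _ => hr.1.trans_le (le_max_left r t)).mul (by fun_prop))
  have hcs := abs_setIntegral_mul_weight_le measurableSet_Ioo (fun t ht => pow_nonneg ht.1.le 3)
    hK (memLp_radLap_mul_sqrt_cube hu hL2)
  rw [integral_radialGreen_max_sq_mul_cube hr] at hcs
  have hlog : √((-Real.log r - (1 - r ^ 2) / 2) / 4) ≤ √(-Real.log r) / 2 := by
    have hr2 : r ^ 2 < 1 := by nlinarith [hr.1, hr.2]
    calc _ ≤ √(-Real.log r / 2 ^ 2) := Real.sqrt_le_sqrt (by linarith)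
      _ = √(-Real.log r) / 2 := by rw [Real.sqrt_div' _ (by positivity), Real.sqrt_sq two_pos.le]
  have hω : 0 < ω₃ := by unfold ω₃; positivity
  rw [eq_neg_integral_radialGreen_max_mul hu huc hub hL2 hr, abs_neg, radLapNormSq,
    Real.sqrt_mul hω.le]
  calc _ ≤ _ := hcs
    _ ≤ √(-Real.log r) / 2 * √(∫ t in Ioo 0 1, radLap u t ^ 2 * t ^ 3) := by gcongr
    _ = _ := by field_simp
end

section
/- Let u be a radial function in H²_N(B) = H¹₀(B) ∩ H²(B) on the unit ball B ⊂ ℝ⁴, with the pointwise bound |u(x)| ≤ (−log|x|)^{1/2}/(2√ω₃)·‖Δu‖₂. Then for every p ≥ 1, ∫_B |x|^α |u(x)|^p dx ≤ (ε/4)^{1+p/2} Γ(1+p/2) ω₃^{1−p/2} 2^{−p} ‖Δu‖₂^p, where ε = 4/(4+α) and ω₃ = 2π². -/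
open MeasureTheory

/-!
With `C = D / (2 √ω₃)` the pointwise bound gives
`r ^ (α + 3) * |u r| ^ p ≤ r ^ (α + 3) * (-log r) ^ (p / 2) * C ^ p` on `(0, 1)`.
The substitution `r = exp (-t)` turns the integral of the right-hand side into the Gamma integral
`∫₀^∞ t ^ (p / 2) * exp (-(α + 4) t) dt = (α + 4) ^ (-(1 + p / 2)) Γ(1 + p / 2)`.
-/

open Real Set

lemma image_exp_neg_Ioi : (fun t : ℝ => exp (-t)) '' Ioi 0 = Ioo 0 1 := by
  ext r
  constructor
  · rintro ⟨t, ht, rfl⟩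
    exact ⟨exp_pos _, exp_lt_one_iff.mpr (neg_neg_iff_pos.mpr ht)⟩
  · intro hr
    refine ⟨-log r, neg_pos.mpr (log_neg hr.1 hr.2), ?_⟩
    simp [exp_log hr.1]

lemma hasDerivWithinAt_exp_neg (s : Set ℝ) (t : ℝ) :
    HasDerivWithinAt (fun t : ℝ => exp (-t)) (-exp (-t)) s t := by
  simpa [Function.comp_def] using
    ((hasDerivAt_exp (-t)).comp t (hasDerivAt_neg t)).hasDerivWithinAt

lemma injOn_exp_neg : InjOn (fun t : ℝ => exp (-t)) (Ioi 0) :=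
  fun _ _ _ _ h => neg_injective (exp_injective h)

section ExpNegSubstitution

variable {E : Type*} [NormedAddCommGroup E] [NormedSpace ℝ E]

lemma integrableOn_Ioo_zero_one_iff_exp_neg (f : ℝ → E) :
    IntegrableOn f (Ioo 0 1) ↔ IntegrableOn (fun t => exp (-t) • f (exp (-t))) (Ioi 0) := by
  rw [← image_exp_neg_Ioi, integrableOn_image_iff_integrableOn_abs_deriv_smul measurableSet_Ioi
    (fun t _ => hasDerivWithinAt_exp_neg _ t) injOn_exp_neg]
  simp only [abs_neg, abs_of_pos (exp_pos _)]

lemma integral_Ioo_zero_one_eq_exp_neg (f : ℝ → E) :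
    ∫ r in Ioo 0 1, f r = ∫ t in Ioi 0, exp (-t) • f (exp (-t)) := by
  rw [← image_exp_neg_Ioi, integral_image_eq_integral_abs_deriv_smul measurableSet_Ioi
    (fun t _ => hasDerivWithinAt_exp_neg _ t) injOn_exp_neg]
  simp only [abs_neg, abs_of_pos (exp_pos _)]

end ExpNegSubstitution

lemma exp_neg_mul_rpow_mul_neg_log_rpow_exp_neg (a b t : ℝ) :
    exp (-t) • (exp (-t) ^ a * (-log (exp (-t))) ^ b) = t ^ b * exp (-((a + 1) * t)) := by
  rw [log_exp, neg_neg, ← exp_mul, smul_eq_mul, ← mul_assoc, ← exp_add, mul_comm]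
  ring_nf

lemma integrableOn_rpow_mul_neg_log_rpow {a b : ℝ} (ha : -1 < a) (hb : -1 < b) :
    IntegrableOn (fun r => r ^ a * (-log r) ^ b) (Ioo 0 1) := by
  rw [integrableOn_Ioo_zero_one_iff_exp_neg]
  simp_rw [exp_neg_mul_rpow_mul_neg_log_rpow_exp_neg]
  simpa only [rpow_one, neg_mul] using
    integrableOn_rpow_mul_exp_neg_mul_rpow hb zero_lt_one (by linarith : 0 < a + 1)

lemma integral_rpow_mul_neg_log_rpow {a b : ℝ} (ha : -1 < a) (hb : -1 < b) :
    ∫ r in Ioo 0 1, r ^ a * (-log r) ^ b = (1 / (a + 1)) ^ (b + 1) * Gamma (b + 1) := by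
  rw [integral_Ioo_zero_one_eq_exp_neg]
  simp_rw [exp_neg_mul_rpow_mul_neg_log_rpow_exp_neg]
  simpa using
    integral_rpow_mul_exp_neg_mul_Ioi (by linarith : 0 < b + 1) (by linarith : 0 < a + 1)

lemma abs_rpow_le_of_abs_le_sqrt_mul {x y C p : ℝ} (hy : 0 ≤ y) (hC : 0 ≤ C) (hp : 0 ≤ p)
    (h : |x| ≤ √y * C) : |x| ^ p ≤ y ^ (p / 2) * C ^ p := calc
  |x| ^ p ≤ (√y * C) ^ p := rpow_le_rpow (abs_nonneg x) h hp
  _ = y ^ (p / 2) * C ^ p := by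
    rw [mul_rpow (sqrt_nonneg y) hC, sqrt_eq_rpow, ← rpow_mul hy, one_div_mul_eq_div]

lemma integral_rpow_mul_abs_rpow_le_of_abs_le_sqrt_neg_log {u : ℝ → ℝ} {a p C : ℝ}
    (ha : -1 < a) (hp : 0 ≤ p) (hC : 0 ≤ C) (hu : ∀ r ∈ Ioo (0 : ℝ) 1, |u r| ≤ √(-log r) * C) :
    ∫ r in Ioo 0 1, r ^ a * |u r| ^ p ≤ (1 / (a + 1)) ^ (p / 2 + 1) * Gamma (p / 2 + 1) * C ^ p := by
  have hb : -1 < p / 2 := by linarith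
  rw [← integral_rpow_mul_neg_log_rpow ha hb, ← integral_mul_const]
  refine integral_mono_of_nonneg ?_ ((integrableOn_rpow_mul_neg_log_rpow ha hb).mul_const _) ?_
  · exact ae_restrict_of_forall_mem measurableSet_Ioo fun r hr => by
      have := hr.1
      positivity
  · refine ae_restrict_of_forall_mem measurableSet_Ioo fun r hr => ?_
    simp only [mul_assoc]
    exact mul_le_mul_of_nonneg_left (abs_rpow_le_of_abs_le_sqrt_mul
      (neg_nonneg.mpr (log_nonpos hr.1.le hr.2.le)) hC hp (hu r hr)) (rpow_nonneg hr.1.le a)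

lemma div_two_mul_sqrt_rpow {x D : ℝ} (hx : 0 ≤ x) (hD : 0 ≤ D) (p : ℝ) :
    (D / (2 * √x)) ^ p = 2 ^ (-p) * x ^ (-(p / 2)) * D ^ p := by
  rw [div_rpow hD (by positivity), mul_rpow zero_le_two (sqrt_nonneg x), sqrt_eq_rpow,
    ← rpow_mul hx, rpow_neg zero_le_two, rpow_neg hx, one_div_mul_eq_div]
  ring

theorem weighted_Lp_embedding_radial_general (u : ℝ → ℝ) (α p D : ℝ)
    (hα : 0 < α) (hp : 1 ≤ p) (hD : 0 ≤ D)
    (hbound : ∀ r ∈ Set.Ioo (0:ℝ) 1,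
      |u r| ≤ Real.sqrt (-Real.log r) / (2 * Real.sqrt ω₃) * D) :
    ω₃ * ∫ r in Set.Ioo (0:ℝ) 1, r ^ (α + 3) * |u r| ^ p ≤
      (4 / (4 + α) / 4) ^ (1 + p / 2) * Real.Gamma (1 + p / 2) *
        ω₃ ^ (1 - p / 2) * 2 ^ (-p) * D ^ p := by
  have hω : 0 < ω₃ := by unfold ω₃; positivity
  have hu : ∀ r ∈ Ioo (0 : ℝ) 1, |u r| ≤ √(-log r) * (D / (2 * √ω₃)) :=
    fun r hr => (hbound r hr).trans_eq (by ring)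
  calc ω₃ * ∫ r in Ioo 0 1, r ^ (α + 3) * |u r| ^ p
      ≤ ω₃ * ((1 / (α + 3 + 1)) ^ (p / 2 + 1) * Gamma (p / 2 + 1) * (D / (2 * √ω₃)) ^ p) :=
        mul_le_mul_of_nonneg_left (integral_rpow_mul_abs_rpow_le_of_abs_le_sqrt_neg_log
          (by linarith) (by linarith) (by positivity) hu) hω.le
    _ = _ := by
      rw [div_two_mul_sqrt_rpow hω.le hD, show 1 - p / 2 = 1 + -(p / 2) by ring,
        rpow_add hω, rpow_one, show 4 / (4 + α) / 4 = 1 / (α + 3 + 1) by field_simp; ring,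
        add_comm 1 (p / 2)]
      ring

/-- Weighted `Lᵖ` estimate for radial functions in `H²_N(B)` on the unit ball of `ℝ⁴`
satisfying the pointwise bound `|u(r)| ≤ √(-log r)/(2√ω₃) · ‖Δu‖₂`; here `D = ‖Δu‖₂`
and all integrals over `B` are written in polar coordinates. -/
theorem weighted_Lp_embedding_radial (u : ℝ → ℝ) (α p D : ℝ)
    (hα : 0 < α) (hp : 1 ≤ p) (hD : 0 ≤ D)
    (hmeas : Measurable u)
    (hbound : ∀ r ∈ Set.Ioo (0:ℝ) 1,
      |u r| ≤ Real.sqrt (-Real.log r) / (2 * Real.sqrt ω₃) * D) :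
    ω₃ * ∫ r in Set.Ioo (0:ℝ) 1, r ^ (α + 3) * |u r| ^ p ≤
      (4 / (4 + α) / 4) ^ (1 + p / 2) * Real.Gamma (1 + p / 2) *
        ω₃ ^ (1 - p / 2) * 2 ^ (-p) * D ^ p :=
  weighted_Lp_embedding_radial_general u α p D hα hp hD hbound
end

section
/- Let u be a radial function in H²_N(B) on the unit ball B ⊂ ℝ⁴ satisfying the pointwise bound |u(x)| ≤ (−log|x|)^{1/2}/(2√ω₃)·‖Δu‖₂. Then for every natural number k ≥ 1, ∫_B |x|^α |u(x)|^{2k} dx ≤ k! · ε^{1+k} · 4^{−(1+2k)} · ω₃^{1−k} · ‖Δu‖₂^{2k}, where ε = 4/(4+α). -/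
/-!
Raising the pointwise bound to the power `2k` gives `u(r)^{2k} ≤ (-log r)^k (D² / (4ω₃))^k`, and
the substitution `r = e^{-t}` turns `∫₀¹ r^s (-log r)^k dr` into the Gamma integral
`Γ(k+1) / (s+1)^{k+1} = k! / (s+1)^{k+1}`; with `s = α + 3` this is `k! (ε/4)^{k+1}`.
-/

open MeasureTheory

open Real Set

lemma ω₃_pos : 0 < ω₃ := by unfold ω₃; positivity

theorem integral_Ioo_rpow_mul_neg_log_pow {s : ℝ} (hs : -1 < s) (k : ℕ) :
    ∫ r in Ioo (0 : ℝ) 1, r ^ s * (-log r) ^ k = k.factorial / (s + 1) ^ (k + 1) := by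
  have hderiv (t : ℝ) : HasDerivWithinAt (fun t : ℝ => exp (-t)) (-exp (-t)) (Ioi 0) t := by
    simpa using ((hasDerivAt_neg t).exp).hasDerivWithinAt
  have hinj : InjOn (fun t : ℝ => exp (-t)) (Ioi 0) :=
    fun _ _ _ _ h => neg_injective (exp_injective h)
  have hpullback (t : ℝ) : |-exp (-t)| • (exp (-t) ^ s * (-log (exp (-t))) ^ k) =
      t ^ ((k + 1 : ℝ) - 1) * exp (-((s + 1) * t)) := by
    rw [abs_neg, abs_of_pos (exp_pos _), smul_eq_mul, log_exp, neg_neg, ← exp_mul,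
      add_sub_cancel_right, rpow_natCast, show -((s + 1) * t) = -t + -t * s by ring, exp_add]
    ring
  rw [← image_exp_neg_Ioi,
    integral_image_eq_integral_abs_deriv_smul measurableSet_Ioi (fun t _ => hderiv t) hinj]
  simp_rw [hpullback]
  rw [integral_rpow_mul_exp_neg_mul_Ioi (by positivity) (by linarith), Gamma_nat_eq_factorial,
    one_div, inv_rpow (by linarith), ← rpow_natCast]
  push_cast
  ring

theorem integrableOn_Ioo_rpow_mul_neg_log_pow {s : ℝ} (hs : -1 < s) (k : ℕ) :
    IntegrableOn (fun r : ℝ => r ^ s * (-log r) ^ k) (Ioo 0 1) :=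
  .of_integral_ne_zero <| by
    rw [integral_Ioo_rpow_mul_neg_log_pow hs]
    have : 0 < s + 1 := by linarith
    positivity

lemma pow_two_mul_le_of_abs_le_sqrt_mul {x a c : ℝ} (ha : 0 ≤ a) (h : |x| ≤ √a * c) (k : ℕ) :
    x ^ (2 * k) ≤ (a * c ^ 2) ^ k :=
  calc x ^ (2 * k) = |x| ^ (2 * k) := ((even_two_mul k).pow_abs x).symm
    _ ≤ (√a * c) ^ (2 * k) := pow_le_pow_left₀ (abs_nonneg x) h _
    _ = (a * c ^ 2) ^ k := by rw [pow_mul, mul_pow, sq_sqrt ha]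

theorem setIntegral_Ioo_rpow_mul_pow_le_of_abs_le_sqrt_neg_log {u : ℝ → ℝ} {s c : ℝ}
    (hs : -1 < s) (k : ℕ) (hu : ∀ r ∈ Ioo (0 : ℝ) 1, |u r| ≤ √(-log r) * c) :
    ∫ r in Ioo (0 : ℝ) 1, r ^ s * u r ^ (2 * k) ≤
      k.factorial / (s + 1) ^ (k + 1) * (c ^ 2) ^ k := by
  rw [← integral_Ioo_rpow_mul_neg_log_pow hs, ← integral_mul_const]
  refine integral_mono_of_nonneg ?_ ((integrableOn_Ioo_rpow_mul_neg_log_pow hs k).mul_const _) ?_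
  · filter_upwards [ae_restrict_mem measurableSet_Ioo] with r hr
    exact mul_nonneg (rpow_nonneg hr.1.le _) ((even_two_mul k).pow_nonneg _)
  · filter_upwards [ae_restrict_mem measurableSet_Ioo] with r hr
    have hlog : 0 ≤ -log r := neg_nonneg.mpr (log_nonpos hr.1.le hr.2.le)
    calc r ^ s * u r ^ (2 * k) ≤ r ^ s * (-log r * c ^ 2) ^ k :=
          mul_le_mul_of_nonneg_left (pow_two_mul_le_of_abs_le_sqrt_mul hlog (hu r hr) k)
            (rpow_nonneg hr.1.le _)
      _ = r ^ s * (-log r) ^ k * (c ^ 2) ^ k := by ring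

/-- `D` stands for `‖Δu‖₂`, and the integral over the unit ball of `ℝ⁴` is written in polar
coordinates, `dx = ω₃ r³ dr`. -/
theorem weighted_even_moment_radial_general (u : ℝ → ℝ) (α D : ℝ) (k : ℕ)
    (hα : 0 < α)
    (hbound : ∀ r ∈ Set.Ioo (0:ℝ) 1,
      |u r| ≤ Real.sqrt (-Real.log r) / (2 * Real.sqrt ω₃) * D) :
    ω₃ * ∫ r in Set.Ioo (0:ℝ) 1, r ^ (α + 3) * (u r) ^ (2 * k) ≤
      (k.factorial : ℝ) * (4 / (4 + α)) ^ (1 + k) / 4 ^ (1 + 2 * k) *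
        ω₃ ^ (1 - (k : ℤ)) * D ^ (2 * k) := by
  have hω := ω₃_pos
  have hu (r) (hr : r ∈ Ioo (0 : ℝ) 1) : |u r| ≤ √(-log r) * (D / (2 * √ω₃)) :=
    (hbound r hr).trans_eq (by ring)
  calc ω₃ * ∫ r in Ioo (0 : ℝ) 1, r ^ (α + 3) * u r ^ (2 * k)
      ≤ ω₃ * (k.factorial / (α + 3 + 1) ^ (k + 1) * ((D / (2 * √ω₃)) ^ 2) ^ k) := by
        gcongr
        exact setIntegral_Ioo_rpow_mul_pow_le_of_abs_le_sqrt_neg_log (by linarith) k hu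
    _ = _ := by
        rw [div_pow D, mul_pow, sq_sqrt hω.le, zpow_sub₀ hω.ne', zpow_one, zpow_natCast,
          show α + 3 + 1 = 4 + α by ring, add_comm 1 k, div_pow (D ^ 2), mul_pow, ← pow_mul,
          show (2 : ℝ) ^ 2 = 4 by norm_num, pow_add 4 1, pow_mul, div_pow (4 : ℝ)]
        field_simp
        ring

/-- Weighted even-power moment estimate for radial functions in `H²_N(B)` on the unit
ball of `ℝ⁴` satisfying the pointwise bound `|u(r)| ≤ √(-log r)/(2√ω₃) · ‖Δu‖₂`;
here `D = ‖Δu‖₂`, `ε = 4/(4+α)`, and integrals over `B` are in polar coordinates. -/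
theorem weighted_even_moment_radial (u : ℝ → ℝ) (α D : ℝ) (k : ℕ)
    (hα : 0 < α) (hk : 1 ≤ k) (hD : 0 ≤ D)
    (hmeas : Measurable u)
    (hbound : ∀ r ∈ Set.Ioo (0:ℝ) 1,
      |u r| ≤ Real.sqrt (-Real.log r) / (2 * Real.sqrt ω₃) * D) :
    ω₃ * ∫ r in Set.Ioo (0:ℝ) 1, r ^ (α + 3) * (u r) ^ (2 * k) ≤
      (k.factorial : ℝ) * (4 / (4 + α)) ^ (1 + k) / 4 ^ (1 + 2 * k) *
        ω₃ ^ (1 - (k : ℤ)) * D ^ (2 * k) :=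
  weighted_even_moment_radial_general u α D k hα hbound
end

section
/- (Marshall–Moser lemma) There exists a constant C > 0 such that: if ψ : [0,∞) → ℝ is measurable with ∫_0^∞ ψ(y)² dy ≤ 1, and F(t) = t − (∫_0^t ψ(y) dy)², then ∫_0^∞ e^{−F(t)} dt ≤ C. -/
/-!
Write `g t = ∫_0^t ψ`, `a t = ∫_0^t ψ²` and `F t = t - (g t)²` (this is `moserExponent φ` for the
extension `φ` of `ψ` by zero). Cauchy–Schwarz gives
`(g t - g s)² ≤ (t - s) (a t - a s)`, so in particular `F ≥ 0`. If `2r ≤ s ≤ t` both lie in the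
sublevel set `{F < r}`, then `s (1 - a s) ≤ F s < r` forces `1 - a s < 1/2`, and expanding
`F t` around `s` gives `t - s < 20 r`. Hence `{F < r}` has measure at most `22 r`, and the
layer-cake formula bounds `∫ e^{-F}` by `22 ∫_0^1 (-log σ) dσ = 22`.
-/

open MeasureTheory Set Real

theorem MeasureTheory.LocallyIntegrable.intervalIntegrable {E : Type*} [NormedAddCommGroup E]
    {f : ℝ → E} {μ : Measure ℝ} (hf : LocallyIntegrable f μ) (a b : ℝ) :
    IntervalIntegrable f μ a b :=
  (hf.integrableOn_isCompact isCompact_uIcc).intervalIntegrable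

theorem sq_intervalIntegral_le {φ : ℝ → ℝ} {s t : ℝ} (hst : s ≤ t)
    (hφ : IntervalIntegrable φ volume s t)
    (hφ2 : IntervalIntegrable (fun y => φ y ^ 2) volume s t) :
    (∫ y in s..t, φ y) ^ 2 ≤ (t - s) * ∫ y in s..t, φ y ^ 2 := by
  have hquad : ∀ c : ℝ,
      0 ≤ (t - s) * (c * c) + (-2 * ∫ y in s..t, φ y) * c + ∫ y in s..t, φ y ^ 2 := by
    intro c
    have hexpand : ∫ y in s..t, (φ y - c) ^ 2
        = (t - s) * (c * c) + (-2 * ∫ y in s..t, φ y) * c + ∫ y in s..t, φ y ^ 2 := by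
      have : (fun y => (φ y - c) ^ 2) = fun y => φ y ^ 2 - 2 * c * φ y + c ^ 2 := by
        funext y; ring
      rw [this, intervalIntegral.integral_add (hφ2.sub (hφ.const_mul _)) intervalIntegrable_const,
        intervalIntegral.integral_sub hφ2 (hφ.const_mul _), intervalIntegral.integral_const_mul,
        intervalIntegral.integral_const, smul_eq_mul]
      ring
    exact hexpand ▸ intervalIntegral.integral_nonneg hst fun y _ => sq_nonneg _
  have hdiscrim := discrim_le_zero hquad
  rw [discrim] at hdiscrim
  linarith

theorem Real.volume_le_volume_inter_Iio_add {S : Set ℝ} {c d : ℝ}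
    (h : ∀ s ∈ S, ∀ t ∈ S, c ≤ s → s ≤ t → t - s ≤ d) :
    volume S ≤ volume (S ∩ Iio c) + ENNReal.ofReal d := by
  have hdiam : Metric.ediam (S ∩ Ici c) ≤ ENNReal.ofReal d := by
    refine Metric.ediam_le fun x hx y hy => ?_
    rw [edist_dist, Real.dist_eq]
    refine ENNReal.ofReal_le_ofReal ?_
    rcases le_total x y with hxy | hyx
    · rw [abs_sub_comm, abs_of_nonneg (sub_nonneg.2 hxy)]
      exact h x hx.1 y hy.1 hx.2 hxy
    · rw [abs_of_nonneg (sub_nonneg.2 hyx)]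
      exact h y hy.1 x hx.1 hy.2 hyx
  calc volume S = volume (S ∩ Iio c ∪ S ∩ Ici c) := by
        rw [← inter_union_distrib_left, Iio_union_Ici, inter_univ]
    _ ≤ volume (S ∩ Iio c) + volume (S ∩ Ici c) := measure_union_le _ _
    _ ≤ volume (S ∩ Iio c) + ENNReal.ofReal d := by
        gcongr
        exact (Real.volume_le_diam _).trans hdiam

theorem lintegral_ofReal_exp_neg_le {α : Type*} [MeasurableSpace α] {μ : Measure α}
    {f : α → ℝ} {c : ℝ} (hf : AEMeasurable f μ) (hc : 0 ≤ c)
    (h : ∀ r, μ {x | f x < r} ≤ ENNReal.ofReal (c * r)) :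
    ∫⁻ x, ENNReal.ofReal (exp (-f x)) ∂μ ≤ ENNReal.ofReal c := by
  rw [lintegral_eq_lintegral_meas_lt μ (ae_of_all _ fun x => (exp_pos _).le) (by fun_prop)]
  have hlevel : ∀ σ ∈ Ioi (0 : ℝ), μ {x | σ < exp (-f x)}
      ≤ (Ioc 0 1).indicator (fun σ => ENNReal.ofReal (c * -log σ)) σ := by
    intro σ hσ
    have hset : {x | σ < exp (-f x)} = {x | f x < -log σ} := by
      ext x
      change σ < exp (-f x) ↔ f x < -log σ
      rw [← log_lt_iff_lt_exp hσ]
      constructor <;> intro <;> linarith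
    rw [hset]
    by_cases hσ1 : σ ≤ 1
    · rw [indicator_of_mem (show σ ∈ Ioc 0 1 from ⟨hσ, hσ1⟩)]
      exact h _
    · rw [indicator_of_notMem fun hmem => hσ1 hmem.2]
      have : c * -log σ ≤ 0 := mul_nonpos_of_nonneg_of_nonpos hc
        (neg_nonpos.2 (log_nonneg (le_of_not_ge hσ1)))
      exact (h _).trans_eq (ENNReal.ofReal_of_nonpos this)
  have hint : IntegrableOn (fun σ => c * -log σ) (Ioc 0 1) :=
    (intervalIntegral.intervalIntegrable_log'.neg.const_mul c).1
  have hnn : 0 ≤ᵐ[volume.restrict (Ioc (0 : ℝ) 1)] fun σ => c * -log σ := by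
    filter_upwards [ae_restrict_mem measurableSet_Ioc] with σ hσ
    exact mul_nonneg hc (neg_nonneg.2 (log_nonpos hσ.1.le hσ.2))
  have hlog : ∫ σ in Ioc (0 : ℝ) 1, c * -log σ = c := by
    rw [← intervalIntegral.integral_of_le zero_le_one, intervalIntegral.integral_const_mul,
      intervalIntegral.integral_neg, integral_log_from_zero]
    simp
  calc ∫⁻ σ in Ioi 0, μ {x | σ < exp (-f x)}
      ≤ ∫⁻ σ in Ioi 0, (Ioc 0 1).indicator (fun σ => ENNReal.ofReal (c * -log σ)) σ :=
        setLIntegral_mono' measurableSet_Ioi hlevel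
    _ = ∫⁻ σ in Ioc 0 1, ENNReal.ofReal (c * -log σ) := by
        rw [lintegral_indicator measurableSet_Ioc, Measure.restrict_restrict measurableSet_Ioc,
          inter_eq_left.2 Ioc_subset_Ioi_self]
    _ = ENNReal.ofReal c := by rw [← ofReal_integral_eq_lintegral_ofReal hint hnn, hlog]

theorem sub_lt_of_sublevel {g a : ℝ → ℝ} {r s t : ℝ} (hr : 0 < r)
    (hgs : g s ^ 2 ≤ s * a s) (hgt : (g t - g s) ^ 2 ≤ (t - s) * (a t - a s))
    (has : a s ≤ 1) (hat : a t ≤ 1) (hs : 2 * r ≤ s) (hst : s ≤ t)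
    (hFs : s - g s ^ 2 < r) (hFt : t - g t ^ 2 < r) : t - s < 20 * r := by
  set u := t - s
  set b := 1 - a s
  set D := g t - g s
  have hsb : s * b < r := by nlinarith
  have hb_half : b < 1 / 2 := by nlinarith
  have hD : D ^ 2 ≤ u * b := hgt.trans (by nlinarith)
  have hgb : g s ^ 2 * b < r := by nlinarith
  -- `(2 g(s) D)² ≤ 4 u g(s)² b ≤ 4 u r ≤ (u/4 + 4r)²`
  have hcross : 2 * (g s * D) ≤ u / 4 + 4 * r := by
    have : (2 * (g s * D)) ^ 2 ≤ (u / 4 + 4 * r) ^ 2 := by nlinarith [sq_nonneg (u / 4 - 4 * r)]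
    exact (abs_le_of_sq_le_sq' this (by nlinarith)).2
  have hexpand : t - g t ^ 2 = (s - g s ^ 2) + u - 2 * (g s * D) - D ^ 2 := by ring
  nlinarith

noncomputable def moserExponent (φ : ℝ → ℝ) (t : ℝ) : ℝ := t - (∫ y in 0..t, φ y) ^ 2

section

variable {φ : ℝ → ℝ}

theorem measurable_moserExponent (hφ : MemLp φ 2) : Measurable (moserExponent φ) :=
  (continuous_id.sub ((intervalIntegral.continuous_primitive
    (hφ.locallyIntegrable one_le_two).intervalIntegrable 0).pow 2)).measurable

theorem intervalIntegral_sq_le_one (hφ : MemLp φ 2) (h1 : ∫ y, φ y ^ 2 ≤ 1) {t : ℝ}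
    (ht : 0 ≤ t) : ∫ y in 0..t, φ y ^ 2 ≤ 1 := by
  rw [intervalIntegral.integral_of_le ht]
  exact (setIntegral_le_integral hφ.integrable_sq (ae_of_all _ fun y => sq_nonneg _)).trans h1

theorem sq_primitive_sub_le (hφ : MemLp φ 2) {s t : ℝ} (hst : s ≤ t) :
    ((∫ y in 0..t, φ y) - ∫ y in 0..s, φ y) ^ 2
      ≤ (t - s) * ((∫ y in 0..t, φ y ^ 2) - ∫ y in 0..s, φ y ^ 2) := by
  have hφ1 := (hφ.locallyIntegrable one_le_two).intervalIntegrable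
  have hφ2 : ∀ a b : ℝ, IntervalIntegrable (fun y => φ y ^ 2) volume a b :=
    fun _ _ => hφ.integrable_sq.intervalIntegrable
  rw [intervalIntegral.integral_interval_sub_left (hφ1 _ _) (hφ1 _ _),
    intervalIntegral.integral_interval_sub_left (hφ2 _ _) (hφ2 _ _)]
  exact sq_intervalIntegral_le hst (hφ1 _ _) (hφ2 _ _)

theorem sq_primitive_le (hφ : MemLp φ 2) {t : ℝ} (ht : 0 ≤ t) :
    (∫ y in 0..t, φ y) ^ 2 ≤ t * ∫ y in 0..t, φ y ^ 2 := by
  simpa using sq_primitive_sub_le hφ ht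

theorem moserExponent_nonneg (hφ : MemLp φ 2) (h1 : ∫ y, φ y ^ 2 ≤ 1) {t : ℝ} (ht : 0 ≤ t) :
    0 ≤ moserExponent φ t := by
  rw [moserExponent]
  have := mul_le_mul_of_nonneg_left (intervalIntegral_sq_le_one hφ h1 ht) ht
  linarith [sq_primitive_le hφ ht]

theorem volume_moserExponent_lt_le (hφ : MemLp φ 2) (h1 : ∫ y, φ y ^ 2 ≤ 1) (r : ℝ) :
    volume.restrict (Ioi 0) {t | moserExponent φ t < r} ≤ ENNReal.ofReal (22 * r) := by
  rw [Measure.restrict_apply' measurableSet_Ioi]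
  set S := {t | moserExponent φ t < r} ∩ Ioi 0
  rcases le_or_gt r 0 with hr | hr
  · have : S = ∅ := eq_empty_of_forall_notMem fun t ht =>
      ht.1.not_ge (hr.trans (moserExponent_nonneg hφ h1 ht.2.le))
    simp [this]
  have hdiam : ∀ s ∈ S, ∀ t ∈ S, 2 * r ≤ s → s ≤ t → t - s ≤ 20 * r :=
    fun s hs t ht hrs hst =>
      (sub_lt_of_sublevel (g := fun t => ∫ y in 0..t, φ y) (a := fun t => ∫ y in 0..t, φ y ^ 2)
        hr (sq_primitive_le hφ hs.2.le) (sq_primitive_sub_le hφ hst)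
        (intervalIntegral_sq_le_one hφ h1 hs.2.le) (intervalIntegral_sq_le_one hφ h1 ht.2.le)
        hrs hst hs.1 ht.1).le
  calc volume S ≤ volume (S ∩ Iio (2 * r)) + ENNReal.ofReal (20 * r) :=
        Real.volume_le_volume_inter_Iio_add hdiam
    _ ≤ volume (Ioo 0 (2 * r)) + ENNReal.ofReal (20 * r) := by
        gcongr
        exact fun t ht => ⟨ht.1.2, ht.2⟩
    _ = ENNReal.ofReal (22 * r) := by
        rw [Real.volume_Ioo, ← ENNReal.ofReal_add (by linarith) (by linarith)]
        ring_nf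

end

/-- Marshall–Moser lemma: there is a uniform constant `C` such that whenever
`∫_0^∞ ψ² ≤ 1`, one has `∫_0^∞ e^{-F(t)} dt ≤ C`, where
`F(t) = t - (∫_0^t ψ)²`. -/
theorem marshall_moser :
    ∃ C > (0:ℝ), ∀ ψ : ℝ → ℝ, Measurable ψ →
      (∫⁻ y in Set.Ioi (0:ℝ), ENNReal.ofReal ((ψ y) ^ 2)) ≤ 1 →
      (∫⁻ t in Set.Ioi (0:ℝ),
          ENNReal.ofReal (Real.exp (-(t - (∫ y in Set.Ioo (0:ℝ) t, ψ y) ^ 2)))) ≤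
        ENNReal.ofReal C := by
  refine ⟨22, by norm_num, fun ψ hψ hψ1 => ?_⟩
  set φ := (Ioi (0 : ℝ)).indicator ψ
  have hsq : (fun y => φ y ^ 2) = (Ioi 0).indicator fun y => ψ y ^ 2 := by
    funext y
    by_cases hy : y ∈ Ioi 0 <;> simp [φ, hy]
  have hψsq : IntegrableOn (fun y => ψ y ^ 2) (Ioi 0) :=
    ⟨(hψ.pow_const 2).aestronglyMeasurable,
      (hasFiniteIntegral_iff_ofReal (ae_of_all _ fun y => sq_nonneg _)).2
        (hψ1.trans_lt ENNReal.one_lt_top)⟩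
  have hφ : MemLp φ 2 := by
    rw [memLp_two_iff_integrable_sq ((hψ.indicator measurableSet_Ioi).aestronglyMeasurable), hsq]
    exact hψsq.integrable_indicator measurableSet_Ioi
  have h1 : ∫ y, φ y ^ 2 ≤ 1 := by
    rw [hsq, integral_indicator measurableSet_Ioi,
      integral_eq_lintegral_of_nonneg_ae (ae_of_all _ fun y => sq_nonneg _)
        (hψ.pow_const 2).aestronglyMeasurable]
    exact ENNReal.toReal_le_of_le_ofReal zero_le_one (by simpa using hψ1)
  have hprimitive : ∀ t ∈ Ioi (0 : ℝ), ∫ y in Ioo 0 t, ψ y = ∫ y in 0..t, φ y := by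
    intro t ht
    rw [intervalIntegral.integral_of_le ht.le, integral_Ioc_eq_integral_Ioo]
    exact setIntegral_congr_fun measurableSet_Ioo fun y hy => (indicator_of_mem hy.1 ψ).symm
  rw [setLIntegral_congr_fun measurableSet_Ioi fun t ht => by rw [hprimitive t ht]]
  exact lintegral_ofReal_exp_neg_le (measurable_moserExponent hφ).aemeasurable (by norm_num)
    (volume_moserExponent_lt_le hφ h1)
end

section
/- Let u be a radial function on the unit ball B ⊂ ℝ⁴ and γ > 0, and define w(t) = 2π√(2γ) · u(e^{−t/γ}). Then ∫_B |Δu|² dx = ∫_0^∞ |(γ/2) w''(t) − w'(t)|² dt, provided u is smooth enough for both sides to make sense. -/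
open MeasureTheory

/-!
Substitute `r = e^{-t/γ}`, so that `dr = (r/γ) dt` and `(0, ∞)` is mapped bijectively onto
`(0, 1)`. By the chain rule, `(γ/2) w'' - w' = C r² / (2γ) · (u''(r) + (3/r) u'(r))` with
`C = 2π√(2γ)`, and since `C² = 8π²γ`, squaring gives `2π² r³ (Δu)² · r/γ`, which is the
transformed integrand.
-/

open Real Set Filter Topology

theorem hasDerivAt_exp_neg_div (γ t : ℝ) :
    HasDerivAt (fun s => exp (-s / γ)) (-(exp (-t / γ) / γ)) t := by
  simpa [neg_div, div_eq_mul_inv] using ((hasDerivAt_id t).neg.div_const γ).exp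

section LogSubstitution

variable {γ : ℝ}

theorem image_exp_neg_div_Ioi (hγ : 0 < γ) :
    (fun t => exp (-t / γ)) '' Ioi 0 = Ioo 0 1 := by
  ext r
  constructor
  · rintro ⟨t, ht, rfl⟩
    exact ⟨exp_pos _, exp_lt_one_iff.mpr (div_neg_of_neg_of_pos (neg_neg_of_pos ht) hγ)⟩
  · rintro ⟨hr0, hr1⟩
    refine ⟨-γ * log r, mul_pos_of_neg_of_neg (neg_neg_of_pos hγ) (log_neg hr0 hr1), ?_⟩
    simp only [neg_mul, neg_neg, mul_div_cancel_left₀ _ hγ.ne', exp_log hr0]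

theorem exp_neg_div_injective (hγ : γ ≠ 0) : Function.Injective fun t => exp (-t / γ) :=
  fun a b hab => by simpa [hγ] using exp_injective hab

theorem setIntegral_Ioo_zero_one_eq_setIntegral_Ioi_exp_neg_div (hγ : 0 < γ) (f : ℝ → ℝ) :
    ∫ r in Ioo 0 1, f r = ∫ t in Ioi 0, exp (-t / γ) / γ * f (exp (-t / γ)) := by
  rw [← image_exp_neg_div_Ioi hγ, integral_image_eq_integral_abs_deriv_smul measurableSet_Ioi
    (fun t _ => (hasDerivAt_exp_neg_div γ t).hasDerivWithinAt)
    (exp_neg_div_injective hγ.ne').injOn]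
  simp only [abs_neg, abs_div, abs_of_pos (exp_pos _), abs_of_pos hγ, smul_eq_mul]

theorem hasDerivAt_comp_exp_neg_div {u : ℝ → ℝ} {t : ℝ}
    (hu : DifferentiableAt ℝ u (exp (-t / γ))) :
    HasDerivAt (fun s => u (exp (-s / γ)))
      (-(exp (-t / γ) / γ) * deriv u (exp (-t / γ))) t :=
  (hu.hasDerivAt.comp t (hasDerivAt_exp_neg_div γ t)).congr_deriv (mul_comm _ _)

theorem deriv_deriv_comp_exp_neg_div {u : ℝ → ℝ} {U : Set ℝ} {t : ℝ}
    (hu : ContDiffOn ℝ 2 u U) (hU : IsOpen U) (ht : exp (-t / γ) ∈ U) :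
    deriv (deriv fun s => u (exp (-s / γ))) t =
      (exp (-t / γ) / γ) ^ 2 * deriv (deriv u) (exp (-t / γ)) +
        exp (-t / γ) / γ ^ 2 * deriv u (exp (-t / γ)) := by
  have hφ : Continuous fun s => exp (-s / γ) := by fun_prop
  have hdu : ∀ x ∈ U, DifferentiableAt ℝ u x := fun x hx =>
    (hu.differentiableOn two_ne_zero).differentiableAt (hU.mem_nhds hx)
  have hddu : DifferentiableAt ℝ (deriv u) (exp (-t / γ)) :=
    ((hu.deriv_of_isOpen hU (m := 1) (by norm_num)).differentiableOn one_ne_zero).differentiableAt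
      (hU.mem_nhds ht)
  have hfirst : deriv (fun s => u (exp (-s / γ))) =ᶠ[𝓝 t]
      fun s => -(exp (-s / γ) / γ) * deriv u (exp (-s / γ)) := by
    filter_upwards [(hU.preimage hφ).mem_nhds ht] with s hs
    exact (hasDerivAt_comp_exp_neg_div (hdu _ hs)).deriv
  have hsecond : HasDerivAt (fun s => -(exp (-s / γ) / γ) * deriv u (exp (-s / γ)))
      (-(-(exp (-t / γ) / γ) / γ) * deriv u (exp (-t / γ)) +
        -(exp (-t / γ) / γ) * (-(exp (-t / γ) / γ) * deriv (deriv u) (exp (-t / γ)))) t :=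
    ((hasDerivAt_exp_neg_div γ t).div_const γ).neg.mul (hasDerivAt_comp_exp_neg_div hddu)
  rw [hfirst.deriv_eq, hsecond.deriv]
  ring

theorem log_substitution_radLap {u : ℝ → ℝ} {U : Set ℝ} {t : ℝ} (c : ℝ) (hγ : γ ≠ 0)
    (hu : ContDiffOn ℝ 2 u U) (hU : IsOpen U) (ht : exp (-t / γ) ∈ U) :
    γ / 2 * deriv (deriv fun s => c * u (exp (-s / γ))) t -
        deriv (fun s => c * u (exp (-s / γ))) t =
      c * exp (-t / γ) ^ 2 / (2 * γ) * radLap u (exp (-t / γ)) := by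
  have hdu : DifferentiableAt ℝ u (exp (-t / γ)) :=
    (hu.differentiableOn two_ne_zero).differentiableAt (hU.mem_nhds ht)
  simp only [deriv_const_mul_field']
  rw [deriv_deriv_comp_exp_neg_div hu hU ht, (hasDerivAt_comp_exp_neg_div hdu).deriv, radLap]
  field_simp [(exp_pos (-t / γ)).ne']
  ring

end LogSubstitution

theorem biharmonic_energy_log_substitution_general (u : ℝ → ℝ) (γ : ℝ) (hγ : 0 < γ)
    (hu : ContDiffOn ℝ 2 u (Set.Ioo 0 1)) :
    2 * Real.pi ^ 2 * ∫ r in Set.Ioo (0:ℝ) 1, (radLap u r) ^ 2 * r ^ 3 =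
      ∫ t in Set.Ioi (0:ℝ),
        (γ / 2 * deriv (deriv (fun s : ℝ =>
            2 * Real.pi * Real.sqrt (2 * γ) * u (Real.exp (-s / γ)))) t -
          deriv (fun s : ℝ =>
            2 * Real.pi * Real.sqrt (2 * γ) * u (Real.exp (-s / γ))) t) ^ 2 := by
  have hsqrt : sqrt (2 * γ) ^ 2 = 2 * γ := sq_sqrt (by positivity)
  rw [setIntegral_Ioo_zero_one_eq_setIntegral_Ioi_exp_neg_div hγ, ← integral_const_mul]
  refine setIntegral_congr_fun measurableSet_Ioi fun t ht => ?_
  have hr : exp (-t / γ) ∈ Ioo 0 1 := image_exp_neg_div_Ioi hγ ▸ mem_image_of_mem _ ht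
  rw [log_substitution_radLap _ hγ.ne' hu isOpen_Ioo hr]
  field_simp
  rw [hsqrt]
  ring

/-- Logarithmic change of variables identity for the biharmonic energy of a radial
function on the unit ball `B ⊂ ℝ⁴`: with `w(t) = 2π√(2γ) u(e^{-t/γ})`,
`∫_B |Δu|² dx = 2π² ∫_0^1 |u''(r)+(3/r)u'(r)|² r³ dr = ∫_0^∞ |(γ/2)w''(t) - w'(t)|² dt`. -/
theorem biharmonic_energy_log_substitution (u : ℝ → ℝ) (γ : ℝ) (hγ : 0 < γ)
    (hu : ContDiffOn ℝ 2 u (Set.Ioo 0 1))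
    (huc : ContinuousOn u (Set.Icc 0 1))
    (hL2 : IntegrableOn (fun r => (radLap u r) ^ 2 * r ^ 3) (Set.Ioo 0 1)) :
    2 * Real.pi ^ 2 * ∫ r in Set.Ioo (0:ℝ) 1, (radLap u r) ^ 2 * r ^ 3 =
      ∫ t in Set.Ioi (0:ℝ),
        (γ / 2 * deriv (deriv (fun s : ℝ =>
            2 * Real.pi * Real.sqrt (2 * γ) * u (Real.exp (-s / γ)))) t -
          deriv (fun s : ℝ =>
            2 * Real.pi * Real.sqrt (2 * γ) * u (Real.exp (-s / γ))) t) ^ 2 :=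
  biharmonic_energy_log_substitution_general u γ hγ hu
end

section
/- For the Moser-type sequence u_ε defined on the unit ball B ⊂ ℝ⁴ by u_ε(r) = (1/√ω₃)[ √(|log ε|/4) + (√ε − r²)/(2√(ε|log ε|)) ] for r ≤ ε^{1/4} and u_ε(r) = (1/√ω₃)·|log r|/√(|log ε|) for ε^{1/4} < r ≤ 1, one has ‖Δu_ε‖₂² = 1 + 4/|log ε| for all 0 < ε < 1. -/
open MeasureTheory

/-- The Moser-type sequence on the unit ball `B ⊂ ℝ⁴` (radial profile). -/
noncomputable def moserSeq (ε : ℝ) (r : ℝ) : ℝ :=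
  (1 / Real.sqrt ω₃) *
    (if r ≤ ε ^ ((1:ℝ)/4) then
      Real.sqrt (-Real.log ε / 4) +
        (Real.sqrt ε - r ^ 2) / (2 * Real.sqrt (ε * (-Real.log ε)))
    else (-Real.log r) / Real.sqrt (-Real.log ε))

lemma inner_lap (ε : ℝ) (hε0 : 0 < ε) (hε1 : ε < 1) {r : ℝ} (hr0 : 0 < r) (hra : r < ε ^ ((1:ℝ)/4)) :
    radLap (moserSeq ε) r
      = -4 / Real.sqrt ω₃ / Real.sqrt (ε * (-Real.log ε)) := by
  set c : ℝ := 1 / Real.sqrt ω₃ with hc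
  set D : ℝ := 2 * Real.sqrt (ε * (-Real.log ε)) with hD
  set A : ℝ := Real.sqrt (-Real.log ε / 4) with hA
  set f : ℝ → ℝ := fun s => c * (A + (Real.sqrt ε - s ^ 2) / D) with hf
  have hf' : ∀ s : ℝ, HasDerivAt f (c * (-(2 * s) / D)) s := by
    intro s
    have h1 : HasDerivAt (fun x : ℝ => x ^ 2) (2 * s) s := by
      simpa using hasDerivAt_pow 2 s
    exact (((h1.const_sub (Real.sqrt ε)).div_const D).const_add A).const_mul c
  have hmf : moserSeq ε =ᶠ[nhds r] f := by
    filter_upwards [Iio_mem_nhds hra] with s hs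
    simp only [moserSeq, hf]
    rw [if_pos (le_of_lt (Set.mem_Iio.mp hs))]
  have hd1 : deriv (moserSeq ε) r = c * (-(2 * r) / D) :=
    hmf.deriv_eq.trans (hf' r).deriv
  have hd2 : deriv (deriv (moserSeq ε)) r = c * (-2 / D) := by
    rw [hmf.deriv.deriv_eq]
    have e : deriv f = fun s => (c * (-2 / D)) * s := by
      funext s
      rw [(hf' s).deriv]; ring
    rw [e]
    simpa using ((hasDerivAt_id r).const_mul (c * (-2 / D))).deriv
  have hr0' : r ≠ 0 := hr0.ne'
  have hX : (0:ℝ) < -(ε * Real.log ε) := by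
    nlinarith [Real.log_neg hε0 hε1]
  have hsX : Real.sqrt (-(ε * Real.log ε)) ≠ 0 := (Real.sqrt_pos.2 hX).ne'
  have hw : (0:ℝ) < ω₃ := by
    unfold ω₃; positivity
  have hsw : Real.sqrt ω₃ ≠ 0 := (Real.sqrt_pos.2 hw).ne'
  rw [radLap, hd1, hd2, hD, hc]
  field_simp [hr0', hsX, hsw]
  ring

lemma outer_lap (ε : ℝ) (hε0 : 0 < ε) (hε1 : ε < 1) {r : ℝ}
    (hra : ε ^ ((1:ℝ)/4) < r) :
    radLap (moserSeq ε) r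
      = -2 / Real.sqrt ω₃ / Real.sqrt (-Real.log ε) / r ^ 2 := by
  have ha0 : (0:ℝ) < ε ^ ((1:ℝ)/4) := Real.rpow_pos_of_pos hε0 _
  have hr0 : 0 < r := ha0.trans hra
  have hr0' : r ≠ 0 := hr0.ne'
  set m : ℝ := -(1 / Real.sqrt ω₃ / Real.sqrt (-Real.log ε)) with hm
  set g : ℝ → ℝ := fun s => m * Real.log s with hg
  have hmg : moserSeq ε =ᶠ[nhds r] g := by
    filter_upwards [Ioi_mem_nhds hra] with s hs
    have hs' : ¬ s ≤ ε ^ ((1:ℝ)/4) := not_le.mpr (Set.mem_Ioi.mp hs)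
    simp only [moserSeq, hg, if_neg hs', hm]
    ring
  have hg' : ∀ s : ℝ, s ≠ 0 → deriv g s = m * s⁻¹ := fun s hs =>
    ((Real.hasDerivAt_log hs).const_mul m).deriv
  have hd1 : deriv (moserSeq ε) r = m * r⁻¹ :=
    hmg.deriv_eq.trans (hg' r hr0')
  have hd2 : deriv (deriv (moserSeq ε)) r = m * (-(r ^ 2)⁻¹) := by
    rw [hmg.deriv.deriv_eq]
    have e : deriv g =ᶠ[nhds r] fun s => m * s⁻¹ := by
      filter_upwards [Ioi_mem_nhds hr0] with s hs
      exact hg' s (ne_of_gt hs)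
    rw [e.deriv_eq]
    exact ((hasDerivAt_inv hr0').const_mul m).deriv
  have hw : (0:ℝ) < ω₃ := by unfold ω₃; positivity
  have hsw : Real.sqrt ω₃ ≠ 0 := (Real.sqrt_pos.2 hw).ne'
  have hL : (0:ℝ) < -Real.log ε := neg_pos.2 (Real.log_neg hε0 hε1)
  have hsL : Real.sqrt (-Real.log ε) ≠ 0 := (Real.sqrt_pos.2 hL).ne'
  rw [radLap, hd1, hd2, hm]
  field_simp [hr0']
  ring

/-- `‖Δu_ε‖₂² = ω₃ ∫_0^1 |u_ε'' + (3/r)u_ε'|² r³ dr = 1 + 4/|log ε|`. -/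
theorem moser_sequence_laplacian_norm (ε : ℝ) (hε0 : 0 < ε) (hε1 : ε < 1) :
    ω₃ * ∫ r in Set.Ioo (0:ℝ) 1, (radLap (moserSeq ε) r) ^ 2 * r ^ 3 =
      1 + 4 / (-Real.log ε) := by
  have hw : (0:ℝ) < ω₃ := by unfold ω₃; positivity
  have hL : (0:ℝ) < -Real.log ε := neg_pos.2 (Real.log_neg hε0 hε1)
  have hlne : Real.log ε ≠ 0 := (Real.log_neg hε0 hε1).ne
  set a : ℝ := ε ^ ((1:ℝ)/4) with ha
  have ha0 : (0:ℝ) < a := Real.rpow_pos_of_pos hε0 _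
  have ha1 : a < 1 := Real.rpow_lt_one hε0.le hε1 (by norm_num)
  set K : ℝ := 16 / (ω₃ * (ε * (-Real.log ε))) with hK
  set C : ℝ := 4 / (ω₃ * (-Real.log ε)) with hC
  set G : ℝ → ℝ := fun r => if r < a then K * r ^ 3 else C * r⁻¹ with hG
  -- the integrand agrees a.e. with G on Ioo 0 1
  have h0 : ∀ᵐ r : ℝ ∂volume, r ≠ a := by
    have hs : {x : ℝ | ¬ x ≠ a} = {a} := by ext x; simp
    rw [MeasureTheory.ae_iff, hs]
    exact measure_singleton a
  have hFG : ∀ᵐ r ∂volume, r ∈ Set.Ioo (0:ℝ) 1 →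
      (radLap (moserSeq ε) r) ^ 2 * r ^ 3 = G r := by
    filter_upwards [h0] with r hne hr
    rcases lt_or_gt_of_ne hne with h | h
    · rw [inner_lap ε hε0 hε1 hr.1 h]
      have hX : (0:ℝ) ≤ ε * (-Real.log ε) := by positivity
      simp only [hG, if_pos h]
      rw [div_pow, div_pow, Real.sq_sqrt hw.le, Real.sq_sqrt hX, hK, div_div]
      norm_num
    · rw [outer_lap ε hε0 hε1 h]
      simp only [hG, if_neg (not_lt.2 h.le)]
      rw [div_pow, div_pow, div_pow, Real.sq_sqrt hw.le, Real.sq_sqrt hL.le, hC]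
      have hr0 : r ≠ 0 := (ha0.trans h).ne'
      field_simp
      ring
  rw [setIntegral_congr_ae measurableSet_Ioo hFG]
  -- split the integral
  have hunion : Set.Ioo (0:ℝ) 1 = Set.Ioo 0 a ∪ Set.Ico a 1 :=
    (Set.Ioo_union_Ico_eq_Ioo ha0 ha1.le).symm
  have hdisj : Disjoint (Set.Ioo (0:ℝ) a) (Set.Ico a 1) :=
    Set.disjoint_left.2 fun x hx hx' => absurd hx.2 (not_lt.2 hx'.1)
  have hi1 : IntegrableOn G (Set.Ioo 0 a) volume := by
    have h1 : IntegrableOn (fun r : ℝ => K * r ^ 3) (Set.Ioo 0 a) volume :=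
      ((continuous_const.mul (continuous_pow 3)).integrableOn_Icc).mono_set
        Set.Ioo_subset_Icc_self
    exact h1.congr_fun (fun r hr => (if_pos hr.2).symm) measurableSet_Ioo
  have hi2 : IntegrableOn G (Set.Ico a 1) volume := by
    have hcont : ContinuousOn (fun r : ℝ => C * r⁻¹) (Set.Icc a 1) :=
      continuousOn_const.mul (ContinuousOn.inv₀ continuousOn_id
        fun x hx => (ha0.trans_le hx.1).ne')
    have h1 : IntegrableOn (fun r : ℝ => C * r⁻¹) (Set.Icc a 1) volume :=
      hcont.integrableOn_Icc
    exact (h1.mono_set Set.Ico_subset_Icc_self).congr_fun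
      (fun r hr => (if_neg (not_lt.2 hr.1)).symm) measurableSet_Ico
  rw [hunion, setIntegral_union hdisj measurableSet_Ico hi1 hi2]
  -- evaluate each piece
  have e1 : ∫ r in Set.Ioo (0:ℝ) a, G r = K * (ε / 4) := by
    rw [setIntegral_congr_fun measurableSet_Ioo
      (fun r (hr : r ∈ Set.Ioo (0:ℝ) a) => if_pos hr.2)]
    rw [← MeasureTheory.integral_Ioc_eq_integral_Ioo,
      ← intervalIntegral.integral_of_le ha0.le,
      intervalIntegral.integral_const_mul, integral_pow]
    have ha4 : a ^ 4 = ε := by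
      rw [ha, ← Real.rpow_natCast (ε ^ ((1:ℝ)/4)) 4, ← Real.rpow_mul hε0.le]
      norm_num
    norm_num [ha4]
  have e2 : ∫ r in Set.Ico a 1, G r = C * (-Real.log ε / 4) := by
    rw [MeasureTheory.integral_Ico_eq_integral_Ioo]
    rw [setIntegral_congr_fun measurableSet_Ioo
      (fun r (hr : r ∈ Set.Ioo a 1) => if_neg (not_lt.2 hr.1.le))]
    rw [← MeasureTheory.integral_Ioc_eq_integral_Ioo,
      ← intervalIntegral.integral_of_le ha1.le,
      intervalIntegral.integral_const_mul]
    rw [integral_inv (by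
      rw [Set.uIcc_of_le ha1.le]
      exact fun hmem => absurd hmem.1 (not_le.2 ha0))]
    have hla : Real.log (1 / a) = -Real.log ε / 4 := by
      rw [one_div, Real.log_inv, ha, Real.log_rpow hε0]
      ring
    rw [hla]
  rw [e1, e2, hK, hC]
  field_simp
  ring
end

section
/- Let w ∈ C²([0,∞)) with w(0)=0, w'(t) → 0 as t → ∞, w, w' ≥ 0, and ∫_0^∞ |w'(t) − ((α+4)/2)w''(t)|² dt ≤ 1 for α > 0. Then 0 ≤ w'(0) ≤ √(2/(α+4)) and w'(t) ≤ √(2/(α+4)) · (1 + 2√(t/(α+4))) for all t ≥ 0. -/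
/-!
With `c = (α + 4) / 2`, expanding the square and integrating `w' w'' = (w'² / 2)'` gives
`∫ₛᵀ (w' - c w'')² ≥ c² ∫ₛᵀ w''² + c (w'(s)² - w'(T)²)`. Letting `T → ∞` (where `w' → 0`) yields
`c² ∫ₛᵀ w''² + c w'(s)² ≤ 1`. The term `c w'(s)²` bounds `w'(0)` as `s → 0`, and by
Cauchy–Schwarz `c (w'(t) - w'(s)) = ∫ₛᵗ c w'' ≤ √(t - s)`, which bounds `w'(t)`.
-/

open MeasureTheory Filter Set Topology

lemma intervalIntegral_le_of_setLIntegral_Ioi_le {f : ℝ → ℝ} {a s T M : ℝ} (hf : ∀ x, 0 ≤ f x)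
    (hM : 0 ≤ M) (hI : ∫⁻ x in Ioi a, ENNReal.ofReal (f x) ≤ ENNReal.ofReal M)
    (hs : a ≤ s) (hsT : s ≤ T) : ∫ x in s..T, f x ≤ M := by
  rw [intervalIntegral.integral_of_le hsT, ← ENNReal.ofReal_le_ofReal_iff hM,
    ← Real.enorm_of_nonneg (setIntegral_nonneg measurableSet_Ioc fun x _ => hf x)]
  calc ‖∫ x in Ioc s T, f x‖ₑ ≤ ∫⁻ x in Ioc s T, ‖f x‖ₑ := enorm_integral_le_lintegral_enorm _
    _ = ∫⁻ x in Ioc s T, ENNReal.ofReal (f x) := by simp only [Real.enorm_of_nonneg (hf _)]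
    _ ≤ ∫⁻ x in Ioi a, ENNReal.ofReal (f x) := lintegral_mono_set fun x hx => hs.trans_lt hx.1
    _ ≤ ENNReal.ofReal M := hI

lemma tendsto_deriv_nhdsGT_derivWithin_Ici {f : ℝ → ℝ} {a : ℝ} (hf : ContDiffOn ℝ 1 f (Ici a)) :
    Tendsto (deriv f) (𝓝[>] a) (𝓝 (derivWithin f (Ici a) a)) := by
  have hcont := hf.continuousOn_derivWithin (uniqueDiffOn_Ici a) le_rfl a self_mem_Ici
  refine (hcont.mono_left (nhdsWithin_mono a Ioi_subset_Ici_self)).congr' ?_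
  filter_upwards [self_mem_nhdsWithin] with x hx
  exact derivWithin_of_mem_nhds (Ici_mem_nhds hx)

lemma deriv_eq_derivWithin_Ici_or_eq_zero (f : ℝ → ℝ) (a : ℝ) :
    deriv f a = derivWithin f (Ici a) a ∨ deriv f a = 0 := by
  by_cases hf : DifferentiableAt ℝ f a
  · exact .inl (hf.derivWithin (uniqueDiffOn_Ici a a self_mem_Ici)).symm
  · exact .inr (deriv_zero_of_not_differentiableAt hf)

lemma hasDerivAt_deriv_of_contDiffOn_two {f : ℝ → ℝ} {s : Set ℝ} (hf : ContDiffOn ℝ 2 f s)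
    (hs : IsOpen s) {x : ℝ} (hx : x ∈ s) : HasDerivAt (deriv f) (deriv (deriv f) x) x :=
  ((hf.deriv_of_isOpen hs (by norm_num : (1 : WithTop ℕ∞) + 1 ≤ 2)).differentiableOn
    one_ne_zero x hx |>.differentiableAt (hs.mem_nhds hx)).hasDerivAt

lemma continuousOn_deriv_deriv_of_contDiffOn_two {f : ℝ → ℝ} {s : Set ℝ}
    (hf : ContDiffOn ℝ 2 f s) (hs : IsOpen s) : ContinuousOn (deriv (deriv f)) s :=
  (hf.deriv_of_isOpen hs (by norm_num : (1 : WithTop ℕ∞) + 1 ≤ 2)).continuousOn_deriv_of_isOpen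
    hs le_rfl

lemma sqrt_div_le_sqrt_two_div_mul_sqrt_div {κ : ℝ} (hκ : 0 < κ) (t : ℝ) :
    √t / κ ≤ √(2 / κ) * √(t / κ) := by
  rw [Real.sqrt_div' _ hκ.le, Real.sqrt_div' _ hκ.le, div_mul_div_comm,
    Real.mul_self_sqrt hκ.le]
  gcongr
  exact le_mul_of_one_le_left (Real.sqrt_nonneg t) Real.one_lt_sqrt_two.le

section Interval

variable {s T : ℝ}

lemma sq_intervalIntegral_le_mul_intervalIntegral_sq {f : ℝ → ℝ} (hsT : s ≤ T)
    (hf : ContinuousOn f (Icc s T)) :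
    (∫ x in s..T, f x) ^ 2 ≤ (T - s) * ∫ x in s..T, f x ^ 2 := by
  rcases hsT.eq_or_lt with rfl | hlt
  · simp
  have hfi : IntervalIntegrable f volume s T := hf.intervalIntegrable_of_Icc hsT
  have hf2i : IntervalIntegrable (fun x => f x ^ 2) volume s T :=
    (hf.pow 2).intervalIntegrable_of_Icc hsT
  set I := ∫ x in s..T, f x
  set m := I / (T - s)
  -- the variance of `f` about its mean `m` is nonnegative
  have hvar : 0 ≤ ∫ x in s..T, (f x ^ 2 - 2 * m * f x + m ^ 2) :=
    intervalIntegral.integral_nonneg hsT fun x _ => by nlinarith [sq_nonneg (f x - m)]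
  rw [intervalIntegral.integral_add (hf2i.sub (hfi.const_mul _)) intervalIntegrable_const,
    intervalIntegral.integral_sub hf2i (hfi.const_mul _), intervalIntegral.integral_const_mul,
    intervalIntegral.integral_const, smul_eq_mul] at hvar
  have hm : m * (T - s) = I := div_mul_cancel₀ I (sub_pos.2 hlt).ne'
  nlinarith

variable {D D2 : ℝ → ℝ} {c : ℝ}

lemma sq_mul_integral_sq_add_le_integral_sq_sub (hsT : s ≤ T)
    (hD : ∀ x ∈ Icc s T, HasDerivAt D (D2 x) x) (hD2 : ContinuousOn D2 (Icc s T)) :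
    c ^ 2 * (∫ x in s..T, D2 x ^ 2) + c * (D s ^ 2 - D T ^ 2) ≤
      ∫ x in s..T, (D x - c * D2 x) ^ 2 := by
  have hDc : ContinuousOn D (Icc s T) := fun x hx => (hD x hx).continuousAt.continuousWithinAt
  have hsqi : IntervalIntegrable (fun x => D2 x ^ 2) volume s T :=
    (hD2.pow 2).intervalIntegrable_of_Icc hsT
  have hprodi : IntervalIntegrable (fun x => D x * D2 x) volume s T :=
    (hDc.mul hD2).intervalIntegrable_of_Icc hsT
  have hprod : ∫ x in s..T, D x * D2 x = D T ^ 2 / 2 - D s ^ 2 / 2 := by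
    refine intervalIntegral.integral_eq_sub_of_hasDerivAt (f := fun x => D x ^ 2 / 2)
      (fun x hx => ?_) hprodi
    rw [uIcc_of_le hsT] at hx
    exact (((hD x hx).pow 2).div_const 2).congr_deriv (by ring)
  calc c ^ 2 * (∫ x in s..T, D2 x ^ 2) + c * (D s ^ 2 - D T ^ 2)
      = ∫ x in s..T, (c ^ 2 * D2 x ^ 2 - 2 * c * (D x * D2 x)) := by
        rw [intervalIntegral.integral_sub (hsqi.const_mul _) (hprodi.const_mul _),
          intervalIntegral.integral_const_mul, intervalIntegral.integral_const_mul, hprod]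
        ring
    _ ≤ ∫ x in s..T, (D x - c * D2 x) ^ 2 :=
        intervalIntegral.integral_mono_on hsT ((hsqi.const_mul _).sub (hprodi.const_mul _))
          (((hDc.sub (hD2.const_smul c)).pow 2).intervalIntegrable_of_Icc hsT)
          fun x _ => by nlinarith [sq_nonneg (D x)]

lemma mul_sub_le_sqrt_of_sq_mul_integral_sq_le (hsT : s ≤ T)
    (hD : ∀ x ∈ Icc s T, HasDerivAt D (D2 x) x) (hD2 : ContinuousOn D2 (Icc s T))
    (h : c ^ 2 * (∫ x in s..T, D2 x ^ 2) ≤ 1) :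
    c * (D T - D s) ≤ √(T - s) := by
  have hFTC : ∫ x in s..T, c * D2 x = c * (D T - D s) := by
    rw [intervalIntegral.integral_const_mul, intervalIntegral.integral_eq_sub_of_hasDerivAt
      (fun x hx => hD x (uIcc_of_le hsT ▸ hx)) (hD2.intervalIntegrable_of_Icc hsT)]
  have hCS := sq_intervalIntegral_le_mul_intervalIntegral_sq (f := fun x => c * D2 x) hsT
    (continuousOn_const.mul hD2)
  simp only [mul_pow, intervalIntegral.integral_const_mul, hFTC] at hCS
  refine Real.le_sqrt_of_sq_le ?_
  nlinarith [sub_nonneg.2 hsT]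

end Interval

section HalfLine

variable {D D2 : ℝ → ℝ} {c a L : ℝ}
  (hD : ∀ x ∈ Ioi a, HasDerivAt D (D2 x) x) (hD2 : ContinuousOn D2 (Ioi a))
  (hD_top : Tendsto D atTop (𝓝 0))
  (hE : ∀ s T, a < s → s ≤ T → ∫ x in s..T, (D x - c * D2 x) ^ 2 ≤ 1)
include hD hD2 hD_top hE

lemma sq_mul_integral_sq_add_le_one {s T : ℝ} (hs : a < s) (hsT : s ≤ T) :
    c ^ 2 * (∫ x in s..T, D2 x ^ 2) + c * D s ^ 2 ≤ 1 := by
  have hlim : Tendsto (fun T' => 1 + c * D T' ^ 2) atTop (𝓝 1) := by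
    simpa using ((hD_top.pow 2).const_mul c).const_add 1
  refine ge_of_tendsto hlim ?_
  filter_upwards [eventually_ge_atTop T] with T' hT'
  have hIcc : Icc s T' ⊆ Ioi a := fun x hx => hs.trans_le hx.1
  have hmono : ∫ x in s..T, D2 x ^ 2 ≤ ∫ x in s..T', D2 x ^ 2 :=
    intervalIntegral.integral_mono_interval le_rfl hsT hT'
      (Eventually.of_forall fun x => sq_nonneg (D2 x))
      ((hD2.mono hIcc).pow 2 |>.intervalIntegrable_of_Icc (hsT.trans hT'))
  have henergy := sq_mul_integral_sq_add_le_integral_sq_sub (c := c) (hsT.trans hT')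
    (fun x hx => hD x (hIcc hx)) (hD2.mono hIcc)
  nlinarith [hE s T' hs (hsT.trans hT')]

variable (hL : Tendsto D (𝓝[>] a) (𝓝 L))
include hL

lemma mul_sq_le_one_of_tendsto_nhdsGT : c * L ^ 2 ≤ 1 := by
  refine le_of_tendsto ((hL.pow 2).const_mul c) ?_
  filter_upwards [self_mem_nhdsWithin] with s hs
  simpa using sq_mul_integral_sq_add_le_one hD hD2 hD_top hE hs le_rfl

lemma mul_sub_le_sqrt_of_tendsto_nhdsGT (hc : 0 ≤ c) {T : ℝ} (hT : a < T) :
    c * (D T - L) ≤ √(T - a) := by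
  have hlim : Tendsto (fun s => c * (D T - D s) - √(T - s)) (𝓝[>] a)
      (𝓝 (c * (D T - L) - √(T - a))) :=
    ((hL.const_sub (D T)).const_mul c).sub
      ((continuous_const.sub continuous_id).sqrt.tendsto a |>.mono_left nhdsWithin_le_nhds)
  refine sub_nonpos.1 (le_of_tendsto hlim ?_)
  filter_upwards [Ioo_mem_nhdsGT hT] with s ⟨has, hsT⟩
  have hIcc : Icc s T ⊆ Ioi a := fun x hx => has.trans_le hx.1
  have hbound := sq_mul_integral_sq_add_le_one hD hD2 hD_top hE has hsT.le
  refine sub_nonpos.2 (mul_sub_le_sqrt_of_sq_mul_integral_sq_le hsT.le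
    (fun x hx => hD x (hIcc hx)) (hD2.mono hIcc) ?_)
  nlinarith [mul_nonneg hc (sq_nonneg (D s))]

end HalfLine

theorem gradient_bounds_symmetry_breaking_general (w : ℝ → ℝ) (α : ℝ) (hα : 0 < α)
    (hw : ContDiffOn ℝ 2 w (Set.Ici 0))
    (hw' : Tendsto (deriv w) atTop (nhds 0))
    (hw'pos : ∀ t ≥ (0:ℝ), 0 ≤ deriv w t)
    (hI : (∫⁻ t in Set.Ioi (0:ℝ),
        ENNReal.ofReal ((deriv w t - (α + 4) / 2 * deriv (deriv w) t) ^ 2)) ≤ 1) :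
    0 ≤ deriv w 0 ∧ deriv w 0 ≤ Real.sqrt (2 / (α + 4)) ∧
    ∀ t ≥ (0:ℝ),
      deriv w t ≤ Real.sqrt (2 / (α + 4)) * (1 + 2 * Real.sqrt (t / (α + 4))) := by
  set c := (α + 4) / 2 with hc_def
  have hc : 0 < c := by positivity
  have hD x (hx : x ∈ Ioi (0 : ℝ)) := hasDerivAt_deriv_of_contDiffOn_two
    (hw.mono Ioi_subset_Ici_self) isOpen_Ioi hx
  have hD2 := continuousOn_deriv_deriv_of_contDiffOn_two (hw.mono Ioi_subset_Ici_self) isOpen_Ioi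
  have hE (s T : ℝ) (hs : 0 < s) (hsT : s ≤ T) :
      ∫ x in s..T, (deriv w x - c * deriv (deriv w) x) ^ 2 ≤ 1 :=
    intervalIntegral_le_of_setLIntegral_Ioi_le (fun _ => sq_nonneg _) zero_le_one
      (by rwa [ENNReal.ofReal_one]) hs.le hsT
  have hL := tendsto_deriv_nhdsGT_derivWithin_Ici (hw.of_le one_le_two)
  generalize hL_def : derivWithin w (Ici 0) 0 = L at hL
  have hL_nonneg : 0 ≤ L :=
    ge_of_tendsto hL (eventually_nhdsWithin_of_forall fun x hx => hw'pos x (le_of_lt hx))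
  have hL_le : L ≤ √(2 / (α + 4)) := by
    have := mul_sq_le_one_of_tendsto_nhdsGT hD hD2 hw' hE hL
    rw [hc_def] at this
    refine Real.le_sqrt_of_sq_le ((le_div_iff₀ (by positivity)).2 ?_)
    linarith
  have hbound (t : ℝ) (ht : 0 ≤ t) : deriv w t ≤ L + √t / c := by
    rcases ht.eq_or_lt with rfl | ht
    -- `deriv w 0` is the two-sided derivative, which is `0` if `w` is not differentiable at `0`
    · rcases deriv_eq_derivWithin_Ici_or_eq_zero w 0 with h | h <;> simp [h, hL_def, hL_nonneg]
    · have := mul_sub_le_sqrt_of_tendsto_nhdsGT hD hD2 hw' hE hL hc.le ht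
      rw [sub_zero, ← le_div_iff₀' hc] at this
      linarith
  refine ⟨hw'pos 0 le_rfl, (hbound 0 le_rfl).trans (by simpa using hL_le), fun t ht => ?_⟩
  have := sqrt_div_le_sqrt_two_div_mul_sqrt_div (by positivity : 0 < α + 4) t
  calc deriv w t ≤ L + √t / c := hbound t ht
    _ = L + 2 * (√t / (α + 4)) := by rw [hc_def, div_div_eq_mul_div]; ring
    _ ≤ √(2 / (α + 4)) * (1 + 2 * √(t / (α + 4))) := by nlinarith

theorem gradient_bounds_symmetry_breaking (w : ℝ → ℝ) (α : ℝ) (hα : 0 < α)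
    (hw : ContDiffOn ℝ 2 w (Set.Ici 0))
    (hw0 : w 0 = 0)
    (hw' : Tendsto (deriv w) atTop (nhds 0))
    (hwpos : ∀ t ≥ (0:ℝ), 0 ≤ w t)
    (hw'pos : ∀ t ≥ (0:ℝ), 0 ≤ deriv w t)
    (hI : (∫⁻ t in Set.Ioi (0:ℝ),
        ENNReal.ofReal ((deriv w t - (α + 4) / 2 * deriv (deriv w) t) ^ 2)) ≤ 1) :
    0 ≤ deriv w 0 ∧ deriv w 0 ≤ Real.sqrt (2 / (α + 4)) ∧
    ∀ t ≥ (0:ℝ),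
      deriv w t ≤ Real.sqrt (2 / (α + 4)) * (1 + 2 * Real.sqrt (t / (α + 4))) :=
  gradient_bounds_symmetry_breaking_general w α hα hw hw' hw'pos hI
end
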